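/- For each u ∈ BD^p(X) let I_u ⊂ ℝ be a closed bounded interval containing the image of u, and let Y = ∏_{u ∈ BD^p(X)} I_u with the product topology. Then the evaluation map e : X → Y, e(x)(u) = u(x), is a topological embedding; the closure X̄ of e(X) in Y is a compact Hausdorff space in which e(X) is open and dense, and every u ∈ BD^p(X) extends to a continuous function on X̄. -/

import Mathlib

/-!
Every `u ∈ BD^p(X)` is bounded, so `e(X)` lies in a product of compact intervals and its closure
is compact by Tychonoff. The bumps `y ↦ max 0 (1 - d(y, x) / r)` belong to `BD^p(X)`: they are
`1/r`-Lipschitz and supported in `B(x, r)`, so `(1/r) 1_{B(x,r)}` is an upper gradient (along a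
curve, the variation of a nonnegative Lipschitz function is gained on a time interval spent inside
its support) with finite `L^p` norm. Such bumps separate points from closed sets, hence `e` is an
embedding. Since `X` is locally compact and the product is Hausdorff, `e(X)` is locally closed,
i.e. open in its closure. The extension of `u` is the coordinate projection `ξ ↦ ξ(u)`.
-/

open MeasureTheory Metric Set Filter Topology ENNReal NNReal

noncomputable section

variable {X : Type*} [MetricSpace X] [MeasurableSpace X] [BorelSpace X]

/-- A rectifiable curve in `X`, parametrized by arc length: a `1`-Lipschitz map
defined on the interval `[0, len]`. -/
structure Curve (X : Type*) [MetricSpace X] where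
  len : ℝ
  len_nonneg : 0 ≤ len
  toFun : ℝ → X
  lip : LipschitzOnWith 1 toFun (Set.Icc 0 len)

/-- The line integral `∫_γ g ds` of a nonnegative Borel function along a curve. -/
def lineIntegralAlongCurve (g : X → ℝ≥0∞) (γ : Curve X) : ℝ≥0∞ :=
  ∫⁻ t in Set.Icc (0 : ℝ) γ.len, g (γ.toFun t)

/-- The `p`-modulus of a family of curves. -/
def pModulus (p : ℝ) (μ : Measure X) (Γ : Set (Curve X)) : ℝ≥0∞ :=
  ⨅ ρ ∈ {ρ : X → ℝ≥0∞ | Measurable ρ ∧ ∀ γ ∈ Γ, 1 ≤ lineIntegralAlongCurve ρ γ},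
    ∫⁻ x, ρ x ^ p ∂μ

/-- `g` controls the variation of `u` along the curve `γ`. -/
def UpperGradientAlong (u : X → ℝ) (g : X → ℝ≥0∞) (γ : Curve X) : Prop :=
  ENNReal.ofReal |u (γ.toFun γ.len) - u (γ.toFun 0)| ≤ lineIntegralAlongCurve g γ

/-- The curve `γ` lies in the set `G`. -/
def CurveIn (G : Set X) (γ : Curve X) : Prop :=
  ∀ t ∈ Set.Icc (0 : ℝ) γ.len, γ.toFun t ∈ G

/-- `g` is a `p`-weak upper gradient of `u` relative to the set `G`: the upper gradient
inequality holds along `p`-almost every curve in `G`. -/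
def IsPWeakUpperGradientOn (p : ℝ) (μ : Measure X) (u : X → ℝ) (g : X → ℝ≥0∞)
    (G : Set X) : Prop :=
  Measurable g ∧ pModulus p μ {γ : Curve X | CurveIn G γ ∧ ¬ UpperGradientAlong u g γ} = 0

/-- `g` is a `p`-weak upper gradient of `u` on `X`. -/
def IsPWeakUpperGradient (p : ℝ) (μ : Measure X) (u : X → ℝ) (g : X → ℝ≥0∞) : Prop :=
  IsPWeakUpperGradientOn p μ u g Set.univ

/-- `g` is the minimal `p`-weak upper gradient of `u` (denoted `|∇u|`). -/
def IsMinimalPWeakUpperGradient (p : ℝ) (μ : Measure X)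
    (u : X → ℝ) (g : X → ℝ≥0∞) : Prop :=
  IsPWeakUpperGradient p μ u g ∧
    ∀ g₁ : X → ℝ≥0∞, IsPWeakUpperGradient p μ u g₁ → ∀ᵐ x ∂μ, g x ≤ g₁ x

/-- The `p`-Dirichlet energy `∫_Ω |∇u|^p dμ` of `u` on `Ω`, computed relative to curves in `G`,
expressed as the infimum over all `p`-weak upper gradients of `u` relative to `G`. -/
def pEnergyOn (p : ℝ) (μ : Measure X) (u : X → ℝ) (G Ω : Set X) : ℝ≥0∞ :=
  ⨅ g ∈ {g : X → ℝ≥0∞ | IsPWeakUpperGradientOn p μ u g G}, ∫⁻ x in Ω, g x ^ p ∂μ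

/-- The `p`-Dirichlet energy `∫_X |∇u|^p dμ`. -/
def pEnergy (p : ℝ) (μ : Measure X) (u : X → ℝ) : ℝ≥0∞ :=
  pEnergyOn p μ u Set.univ Set.univ

/-- The `p`-Royden algebra `BD^p(X)`: bounded continuous functions whose minimal `p`-weak
upper gradient lies in `L^p(X)`. -/
def BDp (p : ℝ) (μ : Measure X) : Set (X → ℝ) :=
  {u | Continuous u ∧ (∃ M : ℝ, ∀ x, |u x| ≤ M) ∧ pEnergy p μ u < ⊤}

/-- Convergence in the `BD^p`-topology: uniform boundedness, uniform convergence on compact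
sets, and convergence to zero of the `p`-Dirichlet energy of the differences. -/
def BDpTendsto (p : ℝ) (μ : Measure X) (u : ℕ → X → ℝ) (v : X → ℝ) : Prop :=
  (∃ M : ℝ, ∀ n x, |u n x| ≤ M) ∧
  (∀ K : Set X, IsCompact K → TendstoUniformlyOn u v atTop K) ∧
  Tendsto (fun n => pEnergy p μ (u n - v)) atTop (𝓝 0)

/-- `BD^p_c(X)`: compactly supported members of the `p`-Royden algebra. -/
def BDpc (p : ℝ) (μ : Measure X) : Set (X → ℝ) :=
  {u | u ∈ BDp p μ ∧ HasCompactSupport u}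

/-- The closure of `BD^p_c(X)` in `BD^p(X)` with respect to the `BD^p`-topology. -/
def BDpcl (p : ℝ) (μ : Measure X) : Set (X → ℝ) :=
  {u | u ∈ BDp p μ ∧ ∃ un : ℕ → X → ℝ, (∀ n, un n ∈ BDpc p μ) ∧ BDpTendsto p μ un u}

/-- The Newtonian space `N^{1,p}(X)`. -/
def N1p (p : ℝ) (μ : Measure X) : Set (X → ℝ) :=
  {u | Measurable u ∧ (∫⁻ x, ENNReal.ofReal |u x| ^ p ∂μ) < ⊤ ∧
    ∃ g : X → ℝ≥0∞, IsPWeakUpperGradient p μ u g ∧ (∫⁻ x, g x ^ p ∂μ) < ⊤}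

/-- The seminorm on `N^{1,p}(X)`. -/
def N1pNorm (p : ℝ) (μ : Measure X) (u : X → ℝ) : ℝ≥0∞ :=
  ((∫⁻ x, ENNReal.ofReal |u x| ^ p ∂μ) + pEnergy p μ u) ^ (1 / p)

/-- The Sobolev `p`-capacity of a set `E ⊆ X`. -/
def sobolevCapacity (p : ℝ) (μ : Measure X) (E : Set X) : ℝ≥0∞ :=
  ⨅ u ∈ {u : X → ℝ | u ∈ N1p p μ ∧ ∀ x ∈ E, 1 ≤ u x}, N1pNorm p μ u

/-- Membership in `N^{1,p}_loc(G)`. -/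
def MemN1pLocOn (p : ℝ) (μ : Measure X) (f : X → ℝ) (G : Set X) : Prop :=
  Measurable f ∧ ∀ Ω : Set X, IsCompact (closure Ω) → closure Ω ⊆ G →
    (∫⁻ x in Ω, ENNReal.ofReal |f x| ^ p ∂μ) < ⊤ ∧ pEnergyOn p μ f G Ω < ⊤

/-- `h` is `p`-harmonic in the open set `G`: a continuous `p`-minimizer, i.e.
`∫_Ω |∇h|^p dμ ≤ ∫_Ω |∇v|^p dμ` for every relatively compact open `Ω ⋐ G` and every
`v ∈ N^{1,p}_loc(G)` with `h - v ∈ C_0(Ω)` (that is, `h = v` quasieverywhere off `Ω`). -/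
def IsPHarmonicOn (p : ℝ) (μ : Measure X) (h : X → ℝ) (G : Set X) : Prop :=
  ContinuousOn h G ∧ MemN1pLocOn p μ h G ∧
    ∀ Ω : Set X, IsOpen Ω → IsCompact (closure Ω) → closure Ω ⊆ G →
      ∀ v : X → ℝ, MemN1pLocOn p μ v G →
        sobolevCapacity p μ {x | x ∉ Ω ∧ h x ≠ v x} = 0 →
          pEnergyOn p μ h G Ω ≤ pEnergyOn p μ v G Ω

/-- `HBD^p(X)`: the `p`-harmonic members of the `p`-Royden algebra. -/
def HBDp (p : ℝ) (μ : Measure X) : Set (X → ℝ) :=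
  {h | h ∈ BDp p μ ∧ IsPHarmonicOn p μ h Set.univ}

/-- The `(1,p)`-Poincaré inequality for `(X, d, μ)`. -/
def PoincareIneq (p : ℝ) (μ : Measure X) : Prop :=
  ∃ C σ : ℝ, 0 < C ∧ 1 ≤ σ ∧ ∀ (x : X) (r : ℝ), 0 < r → ∀ u : X → ℝ, ∀ g : X → ℝ≥0∞,
    IsPWeakUpperGradient p μ u g →
      (μ (ball x r))⁻¹ * (∫⁻ y in ball x r,
          ENNReal.ofReal |u y - ⨍ z in ball x r, u z ∂μ| ∂μ) ≤
        ENNReal.ofReal (r * C) *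
          ((μ (ball x (σ * r)))⁻¹ * ∫⁻ y in ball x (σ * r), g y ^ p ∂μ) ^ (1 / p)

/-- The `(p,p)`-Sobolev inequality: `‖f‖_p ≤ C ‖|∇f|‖_p` for all compactly supported
`f ∈ N^{1,p}(X)`. -/
def SobolevIneq (p : ℝ) (μ : Measure X) : Prop :=
  ∃ C : ℝ≥0, ∀ f : X → ℝ, f ∈ N1p p μ → HasCompactSupport f →
    (∫⁻ x, ENNReal.ofReal |f x| ^ p ∂μ) ^ (1 / p) ≤ (C : ℝ≥0∞) * (pEnergy p μ f) ^ (1 / p)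

/-- The evaluation map `e : X → ∏_{u ∈ BD^p(X)} ℝ`, `e(x)(u) = u(x)`. -/
def roydenEval (p : ℝ) (μ : Measure X) (x : X) : ↥(BDp p μ) → ℝ :=
  fun u => (u : X → ℝ) x

/-- The Royden compactification `X̄`: the closure of `e(X)` in the product space. -/
def roydenCpt (p : ℝ) (μ : Measure X) : Set (↥(BDp p μ) → ℝ) :=
  closure (Set.range (roydenEval p μ))

/-- The `p`-Royden boundary `R_p(X) = X̄ \ X`. -/
def roydenBoundary (p : ℝ) (μ : Measure X) : Set (↥(BDp p μ) → ℝ) :=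
  roydenCpt p μ \ Set.range (roydenEval p μ)

/-- The `p`-harmonic boundary `Δ_p(X)`: points of `R_p(X)` at which (the continuous
extensions of) all members of `cl(BD^p_c(X))` vanish. -/
def pHarmonicBoundary (p : ℝ) (μ : Measure X) : Set (↥(BDp p μ) → ℝ) :=
  {ξ | ξ ∈ roydenBoundary p μ ∧ ∀ u : ↥(BDp p μ), (u : X → ℝ) ∈ BDpcl p μ → ξ u = 0}

open Set.Notation

theorem exists_mem_Icc_sub_le_mul_of_lipschitzOnWith {φ : ℝ → ℝ} {K : ℝ≥0} {L : ℝ}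
    (hL : 0 ≤ L) (hφ : LipschitzOnWith K φ (Icc 0 L)) :
    ∃ T ∈ Icc 0 L, φ L - φ 0 ≤ K * (L - T) ∧ ∀ t ∈ Ioo T L, φ 0 < φ t := by
  set S := Icc 0 L ∩ φ ⁻¹' Iic (φ 0)
  have hS : IsClosed S :=
    hφ.continuousOn.preimage_isClosed_of_isClosed isClosed_Icc isClosed_Iic
  have hSbdd : BddAbove S := ⟨L, fun t ht => ht.1.2⟩
  have hTS : sSup S ∈ S := hS.csSup_mem ⟨0, ⟨le_rfl, hL⟩, le_refl (φ 0)⟩ hSbdd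
  refine ⟨sSup S, hTS.1, ?_, fun t ht => ?_⟩
  · have hTL : sSup S ≤ L := hTS.1.2
    calc φ L - φ 0 ≤ |φ L - φ (sSup S)| := by
          linarith [le_abs_self (φ L - φ (sSup S)), show φ (sSup S) ≤ φ 0 from hTS.2]
      _ ≤ K * |L - sSup S| := by
          simpa [Real.dist_eq] using hφ.dist_le_mul L ⟨hL, le_rfl⟩ _ hTS.1
      _ = K * (L - sSup S) := by rw [abs_of_nonneg (sub_nonneg.2 hTL)]
  · by_contra! hle
    exact (le_csSup hSbdd ⟨⟨hTS.1.1.trans ht.1.le, ht.2.le⟩, hle⟩).not_gt ht.1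

theorem exists_Ioo_abs_sub_le_mul_of_lipschitzOnWith {φ : ℝ → ℝ} {K : ℝ≥0} {L : ℝ}
    (hL : 0 ≤ L) (hφ : LipschitzOnWith K φ (Icc 0 L)) :
    ∃ a b, 0 ≤ a ∧ a ≤ b ∧ b ≤ L ∧ |φ L - φ 0| ≤ K * (b - a) ∧
      ∀ t ∈ Ioo a b, min (φ 0) (φ L) < φ t := by
  rcases le_total (φ 0) (φ L) with h | h
  · obtain ⟨T, hT, hle, hlt⟩ := exists_mem_Icc_sub_le_mul_of_lipschitzOnWith hL hφ
    refine ⟨T, L, hT.1, hT.2, le_rfl, by rwa [abs_of_nonneg (sub_nonneg.2 h)], fun t ht => ?_⟩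
    simpa [min_eq_left h] using hlt t ht
  · -- Run the one-sided argument on the reversed path `t ↦ φ (L - t)`.
    have hrev : LipschitzOnWith K (fun t => φ (L - t)) (Icc 0 L) := by
      simpa [Function.comp_def] using
        hφ.comp (IsometryEquiv.subLeft L).isometry.lipschitz.lipschitzOnWith
          fun t (ht : t ∈ Icc 0 L) => ⟨sub_nonneg.2 ht.2, sub_le_self L ht.1⟩
    obtain ⟨T, hT, hle, hlt⟩ := exists_mem_Icc_sub_le_mul_of_lipschitzOnWith hL hrev
    refine ⟨0, L - T, le_rfl, sub_nonneg.2 hT.2, sub_le_self L hT.1, ?_, fun t ht => ?_⟩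
    · simp only [sub_zero, sub_self] at hle
      rw [abs_sub_comm, abs_of_nonneg (sub_nonneg.2 h)]
      linarith
    · simpa [min_eq_right h] using hlt (L - t) ⟨by linarith [ht.2], by linarith [ht.1]⟩

section MetricSpace

variable {X : Type*} [MetricSpace X]

theorem upperGradientAlong_indicator_of_lipschitzWith {u : X → ℝ} {K : ℝ≥0}
    (hu : LipschitzWith K u) (hu0 : 0 ≤ u) {U : Set X} (hU : Function.support u ⊆ U)
    (γ : Curve X) :
    UpperGradientAlong u (U.indicator fun _ => (K : ℝ≥0∞)) γ := by
  obtain ⟨a, b, ha, hab, hb, hle, hpos⟩ := exists_Ioo_abs_sub_le_mul_of_lipschitzOnWith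
    γ.len_nonneg (by simpa using hu.comp_lipschitzOnWith γ.lip)
  have hmem : ∀ t ∈ Ioo a b, γ.toFun t ∈ U := fun t ht =>
    hU ((le_min (hu0 (γ.toFun 0)) (hu0 (γ.toFun γ.len))).trans_lt (hpos t ht)).ne'
  calc ENNReal.ofReal |u (γ.toFun γ.len) - u (γ.toFun 0)|
      ≤ ENNReal.ofReal (K * (b - a)) := ENNReal.ofReal_le_ofReal hle
    _ = ∫⁻ _ in Ioo a b, (K : ℝ≥0∞) := by
        rw [setLIntegral_const, Real.volume_Ioo, ENNReal.ofReal_mul K.coe_nonneg,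
          ENNReal.ofReal_coe_nnreal]
    _ = ∫⁻ t in Ioo a b, U.indicator (fun _ => (K : ℝ≥0∞)) (γ.toFun t) :=
        setLIntegral_congr_fun measurableSet_Ioo fun t ht =>
          (indicator_of_mem (hmem t ht) fun _ => (K : ℝ≥0∞)).symm
    _ ≤ lineIntegralAlongCurve (U.indicator fun _ => (K : ℝ≥0∞)) γ :=
        lintegral_mono_set (Ioo_subset_Icc_self.trans (Icc_subset_Icc ha hb))

def bump (x₀ : X) (r : ℝ) (y : X) : ℝ := max 0 (1 - dist y x₀ / r)

theorem bump_self (x₀ : X) (r : ℝ) : bump x₀ r x₀ = 1 := by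
  simp [bump]

theorem bump_nonneg (x₀ : X) (r : ℝ) : 0 ≤ bump x₀ r := fun _ => le_max_left _ _

theorem abs_bump_le_one (x₀ : X) {r : ℝ} (hr : 0 < r) (y : X) : |bump x₀ r y| ≤ 1 := by
  rw [abs_of_nonneg (bump_nonneg x₀ r y)]
  exact max_le zero_le_one (sub_le_self 1 (by positivity))

theorem support_bump_subset (x₀ : X) {r : ℝ} (hr : 0 < r) :
    Function.support (bump x₀ r) ⊆ ball x₀ r := by
  intro y hy
  by_contra hyr
  have : 1 ≤ dist y x₀ / r := (one_le_div hr).2 (not_lt.1 hyr)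
  exact hy (max_eq_left (by linarith))

theorem lipschitzWith_bump (x₀ : X) {r : ℝ} (hr : 0 < r) :
    LipschitzWith (Real.toNNReal r⁻¹) (bump x₀ r) :=
  LipschitzWith.of_dist_le_mul fun y z => by
    rw [Real.coe_toNNReal _ (inv_nonneg.2 hr.le), Real.dist_eq]
    calc |bump x₀ r y - bump x₀ r z| ≤ |(1 - dist y x₀ / r) - (1 - dist z x₀ / r)| := by
          simpa only [bump, max_comm (0 : ℝ)] using abs_max_sub_max_le_abs _ _ (0 : ℝ)
      _ = r⁻¹ * |dist z x₀ - dist y x₀| := by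
          rw [show (1 - dist y x₀ / r) - (1 - dist z x₀ / r) = r⁻¹ * (dist z x₀ - dist y x₀) by
            ring, abs_mul, abs_of_pos (inv_pos.2 hr)]
      _ ≤ r⁻¹ * dist y z := by
          gcongr
          simpa only [dist_comm y z] using abs_dist_sub_le z y x₀

end MetricSpace

section RoydenAlgebra

variable {X : Type*} [MetricSpace X] [MeasurableSpace X] {p : ℝ} {μ : Measure X}

theorem pModulus_empty (hp : 0 < p) : pModulus p μ (∅ : Set (Curve X)) = 0 := by
  refine le_antisymm ?_ zero_le
  calc pModulus p μ ∅ ≤ ∫⁻ _, (0 : ℝ≥0∞) ^ p ∂μ :=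
        iInf₂_le _ ⟨measurable_const, fun γ hγ => absurd hγ (notMem_empty γ)⟩
    _ = 0 := by simp [ENNReal.zero_rpow_of_pos hp]

theorem isPWeakUpperGradientOn_of_forall (hp : 0 < p) {u : X → ℝ} {g : X → ℝ≥0∞}
    (hg : Measurable g) (h : ∀ γ, UpperGradientAlong u g γ) (G : Set X) :
    IsPWeakUpperGradientOn p μ u g G := by
  refine ⟨hg, ?_⟩
  rw [show {γ | CurveIn G γ ∧ ¬UpperGradientAlong u g γ} = ∅ from
    eq_empty_of_forall_notMem fun γ hγ => hγ.2 (h γ), pModulus_empty hp]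

theorem pEnergy_le_lintegral {u : X → ℝ} {g : X → ℝ≥0∞} (hg : IsPWeakUpperGradient p μ u g) :
    pEnergy p μ u ≤ ∫⁻ x, g x ^ p ∂μ := by
  rw [pEnergy, pEnergyOn, Measure.restrict_univ]
  exact iInf₂_le g hg

theorem mem_BDp_of_lipschitzWith (hp : 0 < p) {u : X → ℝ} {K : ℝ≥0} (hu : LipschitzWith K u)
    (hu0 : 0 ≤ u) (hbdd : ∃ M, ∀ x, |u x| ≤ M) {U : Set X} (hUm : MeasurableSet U)
    (hμU : μ U ≠ ∞) (hU : Function.support u ⊆ U) : u ∈ BDp p μ := by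
  refine ⟨hu.continuous, hbdd, ?_⟩
  have hgrad : IsPWeakUpperGradient p μ u (U.indicator fun _ => (K : ℝ≥0∞)) :=
    isPWeakUpperGradientOn_of_forall hp (measurable_const.indicator hUm)
      (upperGradientAlong_indicator_of_lipschitzWith hu hu0 hU) univ
  have hpow : (fun x => U.indicator (fun _ => (K : ℝ≥0∞)) x ^ p) =
      U.indicator fun _ => (K : ℝ≥0∞) ^ p := by
    ext x
    by_cases hx : x ∈ U <;> simp [hx, ENNReal.zero_rpow_of_pos hp]
  calc pEnergy p μ u ≤ ∫⁻ x, U.indicator (fun _ => (K : ℝ≥0∞)) x ^ p ∂μ :=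
        pEnergy_le_lintegral hgrad
    _ = (K : ℝ≥0∞) ^ p * μ U := by rw [hpow, lintegral_indicator_const hUm]
    _ < ⊤ := ENNReal.mul_lt_top (ENNReal.rpow_lt_top_of_nonneg hp.le ENNReal.coe_ne_top)
        hμU.lt_top

theorem bump_mem_BDp [OpensMeasurableSpace X] (hp : 0 < p) (x₀ : X) {r : ℝ} (hr : 0 < r)
    (hμ : μ (ball x₀ r) ≠ ∞) : bump x₀ r ∈ BDp p μ :=
  mem_BDp_of_lipschitzWith hp (lipschitzWith_bump x₀ hr) (bump_nonneg x₀ r)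
    ⟨1, abs_bump_le_one x₀ hr⟩ measurableSet_ball hμ (support_bump_subset x₀ hr)

end RoydenAlgebra

theorem isInducing_of_forall_mem_nhds {X ι : Type*} [TopologicalSpace X] {F : X → ι → ℝ}
    (hF : ∀ i, Continuous fun x => F x i)
    (hsep : ∀ x, ∀ s ∈ 𝓝 x, ∃ i, ∃ c < F x i, ∀ y, c < F y i → y ∈ s) : IsInducing F := by
  refine isInducing_iff_nhds.2 fun x =>
    le_antisymm ((continuous_pi hF).tendsto x).le_comap fun s hs => ?_
  obtain ⟨i, c, hc, hcs⟩ := hsep x s hs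
  exact mem_comap.2 ⟨{g : ι → ℝ | c < g i},
    (isOpen_lt continuous_const (continuous_apply i)).mem_nhds hc, fun y hy => hcs y hy⟩

theorem isCompact_closure_range_of_forall_bounded {X ι : Type*} {F : X → ι → ℝ}
    (hF : ∀ i, ∃ M, ∀ x, |F x i| ≤ M) : IsCompact (closure (range F)) := by
  choose M hM using hF
  have hcube : IsCompact (univ.pi fun i => Icc (-M i) (M i)) :=
    isCompact_univ_pi fun _ => isCompact_Icc
  refine hcube.of_isClosed_subset isClosed_closure (closure_minimal ?_ hcube.isClosed)
  rintro _ ⟨x, rfl⟩ i -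
  exact abs_le.1 (hM i x)

theorem Topology.IsInducing.isLocallyClosed_range {X Y : Type*} [TopologicalSpace X]
    [TopologicalSpace Y] [WeaklyLocallyCompactSpace X] [T2Space Y] {f : X → Y}
    (hf : IsInducing f) : IsLocallyClosed (range f) := by
  have key : ∀ x, ∃ V : Set Y, IsOpen V ∧ f x ∈ V ∧ V ∩ closure (range f) ⊆ range f := by
    intro x
    obtain ⟨K, hKc, hKx⟩ := exists_compact_mem_nhds x
    obtain ⟨t, ht, htK⟩ := mem_comap.1 (hf.nhds_eq_comap x ▸ hKx)
    obtain ⟨V, hVt, hVo, hxV⟩ := _root_.mem_nhds_iff.1 ht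
    refine ⟨V, hVo, hxV, ?_⟩
    calc V ∩ closure (range f) ⊆ closure (V ∩ range f) := hVo.inter_closure
      _ ⊆ f '' K := closure_minimal (by rintro _ ⟨hV, y, rfl⟩; exact ⟨y, htK (hVt hV), rfl⟩)
          (hKc.image hf.continuous).isClosed
      _ ⊆ range f := image_subset_range f K
  choose V hVo hxV hV using key
  refine ⟨⋃ x, V x, closure (range f), isOpen_iUnion hVo, isClosed_closure,
    Subset.antisymm ?_ ?_⟩
  · rintro _ ⟨x, rfl⟩
    exact ⟨mem_iUnion.2 ⟨x, hxV x⟩, subset_closure (mem_range_self x)⟩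
  · rintro y ⟨hy, hcl⟩
    obtain ⟨x, hx⟩ := mem_iUnion.1 hy
    exact hV x ⟨hx, hcl⟩

theorem dense_preimage_val_closure {Y : Type*} [TopologicalSpace Y] (s : Set Y) :
    Dense (closure s ↓∩ s) :=
  IsInducing.subtypeVal.dense_iff.2 fun x => by
    rw [Subtype.image_preimage_coe, inter_eq_right.2 subset_closure]
    exact x.2

theorem stmt7_general {X : Type*} [MetricSpace X] [MeasurableSpace X] [BorelSpace X]
    [ProperSpace X]
    (p : ℝ) (hp : 1 < p) (μ : MeasureTheory.Measure X)
    (hball : ∀ (x : X) (r : ℝ), 0 < r → 0 < μ (ball x r) ∧ μ (ball x r) < ⊤)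
    :
    Topology.IsEmbedding (roydenEval p μ) ∧
      IsCompact (roydenCpt p μ) ∧
      T2Space ↥(roydenCpt p μ) ∧
      IsOpen ((↑) ⁻¹' Set.range (roydenEval p μ) : Set ↥(roydenCpt p μ)) ∧
      Dense ((↑) ⁻¹' Set.range (roydenEval p μ) : Set ↥(roydenCpt p μ)) ∧
      ∀ u : ↥(BDp p μ), ∃ F : ↥(roydenCpt p μ) → ℝ, Continuous F ∧
        ∀ x : X, F ⟨roydenEval p μ x, subset_closure (Set.mem_range_self x)⟩
          = (u : X → ℝ) x := by
  have hbump (x : X) {r : ℝ} (hr : 0 < r) : bump x r ∈ BDp p μ :=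
    bump_mem_BDp (by linarith) x hr (hball x r hr).2.ne
  have hinducing : IsInducing (roydenEval p μ) := by
    refine isInducing_of_forall_mem_nhds (fun u => u.2.1) fun x s hs => ?_
    obtain ⟨r, hr, hrs⟩ := Metric.mem_nhds_iff.1 hs
    refine ⟨⟨bump x r, hbump x hr⟩, 0, ?_, fun y hy => hrs (support_bump_subset x hr hy.ne')⟩
    simp [roydenEval, bump_self]
  exact ⟨hinducing.isEmbedding, isCompact_closure_range_of_forall_bounded fun u => u.2.2.1,
    inferInstance, hinducing.isLocallyClosed_range.isOpen_preimage_val_closure,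
    dense_preimage_val_closure _, fun u => ⟨fun ξ => (ξ : BDp p μ → ℝ) u,
      (continuous_apply u).comp continuous_subtype_val, fun _ => rfl⟩⟩

/-- The evaluation map `e : X → ∏_{u ∈ BD^p(X)} ℝ` is a topological embedding; the Royden
compactification `X̄ = closure e(X)` is a compact Hausdorff space in which `e(X)` is open
and dense, and every `u ∈ BD^p(X)` extends continuously to `X̄`. -/
theorem stmt7 {X : Type*} [MetricSpace X] [MeasurableSpace X] [BorelSpace X]
    [ProperSpace X] [Nontrivial X]
    (p : ℝ) (hp : 1 < p) (μ : MeasureTheory.Measure X) [μ.IsComplete]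
    (hnoncompact : ¬ IsCompact (Set.univ : Set X))
    (hdoubling : ∃ C : ℝ≥0, ∀ (x : X) (r : ℝ), 0 < r →
      μ (ball x (2 * r)) ≤ (C : ℝ≥0∞) * μ (ball x r))
    (hball : ∀ (x : X) (r : ℝ), 0 < r → 0 < μ (ball x r) ∧ μ (ball x r) < ⊤)
    :
    Topology.IsEmbedding (roydenEval p μ) ∧
      IsCompact (roydenCpt p μ) ∧
      T2Space ↥(roydenCpt p μ) ∧
      IsOpen ((↑) ⁻¹' Set.range (roydenEval p μ) : Set ↥(roydenCpt p μ)) ∧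
      Dense ((↑) ⁻¹' Set.range (roydenEval p μ) : Set ↥(roydenCpt p μ)) ∧
      ∀ u : ↥(BDp p μ), ∃ F : ↥(roydenCpt p μ) → ℝ, Continuous F ∧
        ∀ x : X, F ⟨roydenEval p μ x, subset_closure (Set.mem_range_self x)⟩
          = (u : X → ℝ) x :=
  stmt7_general p hp μ hball

end
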